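/- The maximum of N(g) over all g with each component g_k^i ∈ [0,1] and g_k^i ∈ ∂ReLU(θ_k^i(x)) for some x ∈ 𝒳 equals the maximum of N(g) over the same constraints but with each g_k^i restricted to {0,1}. -/
import Mathlib


open Matrix

noncomputable def ReLU (x : ℝ) : ℝ := max x 0

/-- Subgradient predicate: `g` is a subgradient of `f` at `x`. -/
def IsSubgradient (f : ℝ → ℝ) (x g : ℝ) : Prop := ∀ y, f x + g * (y - x) ≤ f y

/-- `netProd n M g ℓ = M ℓ * diag (g ℓ) * ⋯ * diag (g 1) * M 0`: the matrix
`M_L diag(g_{L-1}) M_{L-1} ⋯ diag(g_1) M_1` of the paper with `ℓ = L - 1`. -/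
noncomputable def netProd (n : ℕ → ℕ) (M : ∀ k, Matrix (Fin (n (k+1))) (Fin (n k)) ℝ)
    (g : ∀ k, Fin (n k) → ℝ) : (k : ℕ) → Matrix (Fin (n (k+1))) (Fin (n 0)) ℝ
  | 0 => M 0
  | (k+1) => M (k+1) * Matrix.diagonal (g (k+1)) * netProd n M g k

/-- `preact n M b x j` is the pre-activation `θ_{j+1}(x)` of the paper. -/
noncomputable def preact (n : ℕ → ℕ) (M : ∀ k, Matrix (Fin (n (k+1))) (Fin (n k)) ℝ)
    (b : ∀ k, Fin (n (k+1)) → ℝ) (x : Fin (n 0) → ℝ) :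
    (k : ℕ) → Fin (n (k+1)) → ℝ
  | 0 => M 0 *ᵥ x + b 0
  | (k+1) => M (k+1) *ᵥ (fun i => max (preact n M b x k i) 0) + b (k+1)

lemma subgrad_forces {θ t : ℝ} (h : IsSubgradient ReLU θ t) (h0 : 0 < t) (h1 : t < 1) :
    θ = 0 := by
  by_contra hne
  rcases lt_or_gt_of_ne hne with hneg | hpos
  · have := h (θ/2)
    simp only [ReLU] at this
    rw [max_eq_right hneg.le, max_eq_right (by linarith)] at this
    nlinarith
  · have := h 0
    simp only [ReLU] at this
    rw [max_eq_left hpos.le, max_self] at this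
    nlinarith

lemma subgrad_zero {t : ℝ} (h0 : 0 ≤ t) (h1 : t ≤ 1) : IsSubgradient ReLU 0 t := by
  intro y
  simp only [ReLU, max_self, sub_zero, zero_add]
  rcases le_or_gt 0 y with hy | hy
  · rw [max_eq_left hy]; nlinarith
  · rw [max_eq_right hy.le]; nlinarith

lemma subgrad_binary (θ : ℝ) : IsSubgradient ReLU θ (if 0 ≤ θ then 1 else 0) := by
  intro y
  simp only [ReLU]
  split_ifs with h
  · rw [max_eq_left h]; rcases le_or_gt 0 y with hy | hy
    · rw [max_eq_left hy]; ring_nf; exact le_rfl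
    · rw [max_eq_right hy.le]; linarith
  · push_neg at h
    rw [max_eq_right h.le]
    rcases le_or_gt 0 y with hy | hy
    · rw [max_eq_left hy]; linarith
    · rw [max_eq_right hy.le]; linarith

noncomputable def updG (n : ℕ → ℕ) (g : ∀ k, Fin (n k) → ℝ) (m : ℕ) (i : Fin (n m)) (t : ℝ) :
    ∀ k, Fin (n k) → ℝ := Function.update g m (Function.update (g m) i t)

lemma updG_self (n : ℕ → ℕ) (g : ∀ k, Fin (n k) → ℝ) (m : ℕ) (i : Fin (n m)) :
    updG n g m i (g m i) = g := by
  simp [updG]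

lemma updG_app (n : ℕ → ℕ) (g : ∀ k, Fin (n k) → ℝ) (m : ℕ) (i : Fin (n m)) (t : ℝ) :
    updG n g m i t m = Function.update (g m) i t := by simp [updG]

lemma updG_same (n : ℕ → ℕ) (g : ∀ k, Fin (n k) → ℝ) (m : ℕ) (i : Fin (n m)) (t : ℝ) :
    updG n g m i t m i = t := by simp [updG]

lemma updG_ne (n : ℕ → ℕ) (g : ∀ k, Fin (n k) → ℝ) (m : ℕ) (i : Fin (n m)) (t : ℝ)
    (k : ℕ) (hk : k ≠ m) : updG n g m i t k = g k := by
  simp [updG, Function.update_of_ne hk]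

lemma updG_ne' (n : ℕ → ℕ) (g : ∀ k, Fin (n k) → ℝ) (m : ℕ) (i : Fin (n m)) (t : ℝ)
    (i' : Fin (n m)) (hi : i' ≠ i) : updG n g m i t m i' = g m i' := by
  simp [updG, Function.update_of_ne hi]

lemma netProd_congr (n : ℕ → ℕ) (M : ∀ k, Matrix (Fin (n (k+1))) (Fin (n k)) ℝ)
    (g g' : ∀ k, Fin (n k) → ℝ) : ∀ k, (∀ k' ≤ k, g k' = g' k') →
    netProd n M g k = netProd n M g' k
  | 0, _ => rfl
  | (k+1), h => by
    rw [netProd, netProd, h (k+1) le_rfl,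
      netProd_congr n M g g' k (fun k' hk' => h k' (hk'.trans k.le_succ))]

lemma netProd_affine (n : ℕ → ℕ) (M : ∀ k, Matrix (Fin (n (k+1))) (Fin (n k)) ℝ)
    (g : ∀ k, Fin (n k) → ℝ) (m : ℕ) (i : Fin (n m)) (t : ℝ) : ∀ k,
    netProd n M (updG n g m i t) k
      = (1 - t) • netProd n M (updG n g m i 0) k + t • netProd n M (updG n g m i 1) k
  | 0 => by
    show M 0 = (1-t) • M 0 + t • M 0
    rw [← add_smul]; ring_nf; rw [one_smul]
  | (k+1) => by
    by_cases hm : k + 1 = m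
    · subst hm
      have hP : ∀ s, netProd n M (updG n g (k+1) i s) k = netProd n M g k := fun s =>
        netProd_congr n M _ g k (fun k' hk' =>
          updG_ne n g (k+1) i s k' (by omega))
      rw [netProd, netProd, netProd, hP, hP, hP]
      rw [updG_app, updG_app, updG_app]
      have hv : (diagonal (Function.update (g (k+1)) i t) : Matrix (Fin (n (k+1))) (Fin (n (k+1))) ℝ)
          = (1 - t) • diagonal (Function.update (g (k+1)) i 0)
            + t • diagonal (Function.update (g (k+1)) i 1) := by
        rw [← diagonal_smul, ← diagonal_smul, diagonal_add]
        refine congrArg diagonal ?_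
        funext i'
        by_cases hi : i' = i
        · subst hi; simp
        · simp only [Pi.smul_apply, Function.update_of_ne hi, smul_eq_mul]; ring
      rw [hv]
      rw [Matrix.mul_add, Matrix.add_mul, Matrix.mul_smul, Matrix.mul_smul, Matrix.smul_mul, Matrix.smul_mul]
    · have he : ∀ s, updG n g m i s (k+1) = g (k+1) := fun s => updG_ne n g m i s (k+1) hm
      rw [netProd, netProd, netProd, he, he, he,
          netProd_affine n M g m i t k,
          Matrix.mul_add, Matrix.mul_smul, Matrix.mul_smul]

lemma nrm_convex {α β : Type*} (Nrm : Matrix α β ℝ → ℝ)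
    (hadd : ∀ A B, Nrm (A + B) ≤ Nrm A + Nrm B)
    (hsmul : ∀ (c : ℝ) A, Nrm (c • A) = |c| * Nrm A)
    (A B : Matrix α β ℝ) {t : ℝ} (h0 : 0 ≤ t) (h1 : t ≤ 1) :
    Nrm ((1 - t) • A + t • B) ≤ max (Nrm A) (Nrm B) := by
  have h2 : Nrm ((1 - t) • A + t • B) ≤ (1 - t) * Nrm A + t * Nrm B := by
    calc Nrm ((1 - t) • A + t • B) ≤ Nrm ((1 - t) • A) + Nrm (t • B) := hadd _ _
      _ = (1 - t) * Nrm A + t * Nrm B := by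
          rw [hsmul, hsmul, abs_of_nonneg (by linarith), abs_of_nonneg h0]
  have hA := le_max_left (Nrm A) (Nrm B)
  have hB := le_max_right (Nrm A) (Nrm B)
  nlinarith

lemma roundBinary (ℓ : ℕ) (n : ℕ → ℕ)
    (M : ∀ k, Matrix (Fin (n (k+1))) (Fin (n k)) ℝ)
    (b : ∀ k, Fin (n (k+1)) → ℝ)
    (Nrm : Matrix (Fin (n (ℓ+1))) (Fin (n 0)) ℝ → ℝ)
    (hadd : ∀ A B, Nrm (A + B) ≤ Nrm A + Nrm B)
    (hsmul : ∀ (c : ℝ) A, Nrm (c • A) = |c| * Nrm A)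
    (x : Fin (n 0) → ℝ) (g : ∀ k, Fin (n k) → ℝ)
    (hg : ∀ j < ℓ, ∀ i, g (j+1) i ∈ Set.Icc (0:ℝ) 1 ∧
          IsSubgradient ReLU (preact n M b x j i) (g (j+1) i)) :
    ∃ g' : ∀ k, Fin (n k) → ℝ,
      (∀ j < ℓ, ∀ i, (g' (j+1) i = 0 ∨ g' (j+1) i = 1) ∧
          IsSubgradient ReLU (preact n M b x j i) (g' (j+1) i)) ∧
      Nrm (netProd n M g ℓ) ≤ Nrm (netProd n M g' ℓ) := by
  classical
  set Bad : (∀ k, Fin (n k) → ℝ) → Finset ((j : Fin ℓ) × Fin (n (j.1+1))) :=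
    fun g => Finset.univ.filter
      (fun p => ¬(g (p.1.1+1) p.2 = 0 ∨ g (p.1.1+1) p.2 = 1)) with hBad
  suffices H : ∀ N (g : ∀ k, Fin (n k) → ℝ), (Bad g).card ≤ N →
      (∀ j < ℓ, ∀ i, g (j+1) i ∈ Set.Icc (0:ℝ) 1 ∧
          IsSubgradient ReLU (preact n M b x j i) (g (j+1) i)) →
      ∃ g' : ∀ k, Fin (n k) → ℝ,
        (∀ j < ℓ, ∀ i, (g' (j+1) i = 0 ∨ g' (j+1) i = 1) ∧
            IsSubgradient ReLU (preact n M b x j i) (g' (j+1) i)) ∧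
        Nrm (netProd n M g ℓ) ≤ Nrm (netProd n M g' ℓ) by
    exact H (Bad g).card g le_rfl hg
  intro N
  induction N with
  | zero =>
    intro g hN hg
    refine ⟨g, fun j hj i => ⟨?_, (hg j hj i).2⟩, le_rfl⟩
    by_contra hbad
    have hp : (⟨⟨j, hj⟩, i⟩ : (j : Fin ℓ) × Fin (n (j.1+1))) ∈ Bad g := by
      simp only [hBad, Finset.mem_filter, Finset.mem_univ, true_and]
      exact hbad
    have := Finset.card_pos.mpr ⟨_, hp⟩
    omega
  | succ N IH =>
    intro g hN hg
    by_cases hb : ∀ j, ∀ (hj : j < ℓ), ∀ i, g (j+1) i = 0 ∨ g (j+1) i = 1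
    · exact ⟨g, fun j hj i => ⟨hb j hj i, (hg j hj i).2⟩, le_rfl⟩
    push_neg at hb
    obtain ⟨j, hj, i, hne0, hne1⟩ := hb
    have hIcc := (hg j hj i).1
    have ht0 : 0 < g (j+1) i := lt_of_le_of_ne hIcc.1 (Ne.symm hne0)
    have ht1 : g (j+1) i < 1 := lt_of_le_of_ne hIcc.2 hne1
    have hθ : preact n M b x j i = 0 := subgrad_forces (hg j hj i).2 ht0 ht1
    have hfeas : ∀ s : ℝ, 0 ≤ s → s ≤ 1 →
        (∀ j' < ℓ, ∀ i', updG n g (j+1) i s (j'+1) i' ∈ Set.Icc (0:ℝ) 1 ∧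
          IsSubgradient ReLU (preact n M b x j' i') (updG n g (j+1) i s (j'+1) i')) := by
      intro s hs0 hs1 j' hj' i'
      by_cases hjj : j' = j
      · subst hjj
        by_cases hii : i' = i
        · subst hii
          rw [updG_same]
          exact ⟨⟨hs0, hs1⟩, by rw [hθ]; exact subgrad_zero hs0 hs1⟩
        · rw [updG_ne' n g (j'+1) i s i' hii]
          exact hg j' hj' i'
      · rw [updG_ne n g (j+1) i s (j'+1) (by omega)]
        exact hg j' hj' i'
    have hcard : ∀ s : ℝ, s = 0 ∨ s = 1 → (Bad (updG n g (j+1) i s)).card ≤ N := by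
      intro s hs
      have hp : (⟨⟨j, hj⟩, i⟩ : (j : Fin ℓ) × Fin (n (j.1+1))) ∈ Bad g := by
        simp only [hBad, Finset.mem_filter, Finset.mem_univ, true_and]
        tauto
      have hsub : Bad (updG n g (j+1) i s) ⊆
          (Bad g).erase ⟨⟨j, hj⟩, i⟩ := by
        intro q hq
        simp only [hBad, Finset.mem_filter, Finset.mem_univ, true_and] at hq
        rcases q with ⟨⟨j', hj'⟩, i'⟩
        rw [Finset.mem_erase]
        by_cases hjj : j' = j
        · subst hjj
          by_cases hii : i' = i
          · subst hii
            rw [updG_same] at hq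
            tauto
          · rw [updG_ne' n g (j'+1) i s i' hii] at hq
            constructor
            · intro hcontra
              apply hii
              have := (Sigma.mk.inj_iff.mp hcontra).2
              exact eq_of_heq this
            · simp only [hBad, Finset.mem_filter, Finset.mem_univ, true_and]
              exact hq
        · rw [updG_ne n g (j+1) i s (j'+1) (by omega)] at hq
          constructor
          · intro hcontra
            apply hjj
            have := (Sigma.mk.inj_iff.mp hcontra).1
            exact Fin.mk.inj_iff.mp this
          · simp only [hBad, Finset.mem_filter, Finset.mem_univ, true_and]
            exact hq
      have := Finset.card_le_card hsub
      rw [Finset.card_erase_of_mem hp] at this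
      omega
    have hkey : Nrm (netProd n M g ℓ) ≤
        max (Nrm (netProd n M (updG n g (j+1) i 0) ℓ))
            (Nrm (netProd n M (updG n g (j+1) i 1) ℓ)) := by
      conv_lhs => rw [show g = updG n g (j+1) i (g (j+1) i) from (updG_self n g (j+1) i).symm]
      rw [netProd_affine]
      exact nrm_convex Nrm hadd hsmul _ _ hIcc.1 hIcc.2
    rcases le_total (Nrm (netProd n M (updG n g (j+1) i 0) ℓ))
        (Nrm (netProd n M (updG n g (j+1) i 1) ℓ)) with hle | hle
    · obtain ⟨g', hbin, hle'⟩ := IH (updG n g (j+1) i 1) (hcard 1 (Or.inr rfl))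
        (hfeas 1 zero_le_one le_rfl)
      exact ⟨g', hbin, le_trans (hkey.trans (max_le hle le_rfl)) hle'⟩
    · obtain ⟨g', hbin, hle'⟩ := IH (updG n g (j+1) i 0) (hcard 0 (Or.inl rfl))
        (hfeas 0 le_rfl zero_le_one)
      exact ⟨g', hbin, le_trans (hkey.trans (max_le le_rfl hle)) hle'⟩

/-- The supremum of `N(g)` over `g` with `g_k^i ∈ [0,1]` and `g_k^i ∈ ∂ReLU(θ_k^i(x))`
for some `x ∈ 𝒳` equals the supremum over the same constraints with `g_k^i ∈ {0,1}`.
The network has `ℓ` hidden layers (`ℓ = L - 1`), affine maps `T_k(x) = M (k) x + b (k)`,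
and `Nrm` is an arbitrary matrix norm. -/
theorem sup_relaxed_eq_sup_binary
    (ℓ : ℕ) (n : ℕ → ℕ)
    (M : ∀ k, Matrix (Fin (n (k+1))) (Fin (n k)) ℝ)
    (b : ∀ k, Fin (n (k+1)) → ℝ)
    (X : Set (Fin (n 0) → ℝ)) (hXo : IsOpen X) (hXne : X.Nonempty)
    (Nrm : Matrix (Fin (n (ℓ+1))) (Fin (n 0)) ℝ → ℝ)
    (hadd : ∀ A B, Nrm (A + B) ≤ Nrm A + Nrm B)
    (hsmul : ∀ (c : ℝ) A, Nrm (c • A) = |c| * Nrm A) :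
    sSup {c : ℝ | ∃ x ∈ X, ∃ g : ∀ k, Fin (n k) → ℝ,
        (∀ j < ℓ, ∀ i, g (j+1) i ∈ Set.Icc (0:ℝ) 1 ∧
          IsSubgradient ReLU (preact n M b x j i) (g (j+1) i)) ∧
        c = Nrm (netProd n M g ℓ)}
      = sSup {c : ℝ | ∃ x ∈ X, ∃ g : ∀ k, Fin (n k) → ℝ,
        (∀ j < ℓ, ∀ i, (g (j+1) i = 0 ∨ g (j+1) i = 1) ∧
          IsSubgradient ReLU (preact n M b x j i) (g (j+1) i)) ∧
        c = Nrm (netProd n M g ℓ)} := by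
  apply csSup_eq_csSup_of_forall_exists_le
  · rintro c ⟨x, hx, g, hgc, rfl⟩
    obtain ⟨g', hbin, hle⟩ := roundBinary ℓ n M b Nrm hadd hsmul x g hgc
    exact ⟨Nrm (netProd n M g' ℓ), ⟨x, hx, g', hbin, rfl⟩, hle⟩
  · rintro c ⟨x, hx, g, hgc, rfl⟩
    refine ⟨Nrm (netProd n M g ℓ), ⟨x, hx, g, fun j hj i => ⟨?_, (hgc j hj i).2⟩, rfl⟩, le_rfl⟩
    rcases (hgc j hj i).1 with h | h <;> rw [h] <;> norm_num
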